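/- arXiv:2602.23000 — 4 statements merged into one kernel-verified Lean document; each statement's English description precedes it below -/
import Mathlib

section
/- With C_{2k+1} and f as defined (f(a,b,c) = median(a,b,c) on same-parity triples, f(a,b,c) = clamp(2k+3−c,[b,a]) when a ≥ b share a parity and c has the other, and f symmetric in its arguments): if u1v1, u2v2, u3v3 are edges of C_{2k+1} none of which equals the edge {1, 2k+1}, then {f(u1,u2,u3), f(v1,v2,v3)} is an edge of C_{2k+1}. -/
/-- The median of three naturals. -/
def med (a b c : ℕ) : ℕ := max (min a b) (min (max a b) c)

/-- `clamp lo hi x` clamps `x` into the interval `[lo, hi]`. -/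
def clamp (lo hi x : ℕ) : ℕ := max lo (min x hi)

/-- The symmetric operation `f` on `{1, …, 2k+1}`: the median on same-parity
triples, and `clamp (2k+3-c) [b,a]` when `a ≥ b` share a parity and `c` has
the opposite parity. -/
def fOp (k a b c : ℕ) : ℕ :=
  if a % 2 = b % 2 ∧ b % 2 = c % 2 then med a b c
  else if a % 2 = b % 2 then clamp (min a b) (max a b) (2 * k + 3 - c)
  else if a % 2 = c % 2 then clamp (min a c) (max a c) (2 * k + 3 - b)
  else clamp (min b c) (max b c) (2 * k + 3 - a)

/-- `{u, v}` is an edge of the cycle `C_{2k+1}` on vertex set `{1, …, 2k+1}`. -/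
def IsEdge (k u v : ℕ) : Prop :=
  1 ≤ u ∧ u ≤ 2 * k + 1 ∧ 1 ≤ v ∧ v ≤ 2 * k + 1 ∧
    (v = u + 1 ∨ u = v + 1 ∨ (u = 1 ∧ v = 2 * k + 1) ∨ (v = 1 ∧ u = 2 * k + 1))

/-- The set `S_k = {2, …, 2k+1}`. -/
def Sk (k : ℕ) : Set ℕ := Set.Icc 2 (2 * k + 1)

/-- The set `S_k^A` of odd vertices of `{1, …, 2k+1}`. -/
def SkA (k : ℕ) : Set ℕ := {u | u ∈ Set.Icc 1 (2 * k + 1) ∧ u % 2 = 1}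

/-- The set `S_k^B` consisting of `1` and the even vertices of `{1, …, 2k+1}`. -/
def SkB (k : ℕ) : Set ℕ := {u | u ∈ Set.Icc 1 (2 * k + 1) ∧ (u = 1 ∨ u % 2 = 0)}

/-- `(u1,u2,u3)` is a bad triple: `{u1,u2,u3}` contains `1` together with two
vertices strictly greater than `1`, exactly one of which is even. -/
def BadTriple (u1 u2 u3 : ℕ) : Prop :=
  (1 = u1 ∨ 1 = u2 ∨ 1 = u3) ∧
    ∃ a b : ℕ, (a = u1 ∨ a = u2 ∨ a = u3) ∧ (b = u1 ∨ b = u2 ∨ b = u3) ∧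
      1 < a ∧ 1 < b ∧ a % 2 = 0 ∧ b % 2 = 1

lemma clamp_lip (lo hi x lo' hi' x' : ℕ) (h1 : lo' ≤ lo+1) (h2 : lo ≤ lo'+1)
    (h3 : hi' ≤ hi+1) (h4 : hi ≤ hi'+1) (h5 : x' ≤ x+1) (h6 : x ≤ x'+1) :
    clamp lo' hi' x' ≤ clamp lo hi x + 1 ∧ clamp lo hi x ≤ clamp lo' hi' x' + 1 := by
  unfold clamp; omega

lemma clamp_par (lo hi x : ℕ) (h1 : lo % 2 = hi % 2) (h2 : hi % 2 = x % 2) :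
    clamp lo hi x % 2 = lo % 2 := by unfold clamp; omega

lemma med_lip (a b c a' b' c' : ℕ) (h1 : a' ≤ a+1) (h2 : a ≤ a'+1)
    (h3 : b' ≤ b+1) (h4 : b ≤ b'+1) (h5 : c' ≤ c+1) (h6 : c ≤ c'+1) :
    med a' b' c' ≤ med a b c + 1 ∧ med a b c ≤ med a' b' c' + 1 := by
  unfold med; omega

lemma med_par (a b c : ℕ) (h1 : a % 2 = b % 2) (h2 : b % 2 = c % 2) :
    med a b c % 2 = a % 2 := by unfold med; omega

lemma clamp_step (lo hi x lo' hi' x' : ℕ) (h1 : lo' ≤ lo+1) (h2 : lo ≤ lo'+1)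
    (h3 : hi' ≤ hi+1) (h4 : hi ≤ hi'+1) (h5 : x' ≤ x+1) (h6 : x ≤ x'+1)
    (p1 : lo % 2 = hi % 2) (p2 : hi % 2 = x % 2)
    (p1' : lo' % 2 = hi' % 2) (p2' : hi' % 2 = x' % 2)
    (pne : ¬ lo % 2 = lo' % 2) :
    clamp lo' hi' x' = clamp lo hi x + 1 ∨ clamp lo hi x = clamp lo' hi' x' + 1 := by
  have hl := clamp_lip lo hi x lo' hi' x' h1 h2 h3 h4 h5 h6
  have q1 := clamp_par lo hi x p1 p2
  have q2 := clamp_par lo' hi' x' p1' p2'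
  omega

lemma med_step (a b c a' b' c' : ℕ) (h1 : a' ≤ a+1) (h2 : a ≤ a'+1)
    (h3 : b' ≤ b+1) (h4 : b ≤ b'+1) (h5 : c' ≤ c+1) (h6 : c ≤ c'+1)
    (p1 : a % 2 = b % 2) (p2 : b % 2 = c % 2)
    (p1' : a' % 2 = b' % 2) (p2' : b' % 2 = c' % 2)
    (pne : ¬ a % 2 = a' % 2) :
    med a' b' c' = med a b c + 1 ∨ med a b c = med a' b' c' + 1 := by
  have hl := med_lip a b c a' b' c' h1 h2 h3 h4 h5 h6
  have q1 := med_par a b c p1 p2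
  have q2 := med_par a' b' c' p1' p2'
  omega

set_option maxHeartbeats 3000000 in
lemma fOp_step (k a b c a' b' c' : ℕ)
    (ha : a' = a + 1 ∨ a = a' + 1) (hb : b' = b + 1 ∨ b = b' + 1)
    (hc : c' = c + 1 ∨ c = c' + 1)
    (haU : a ≤ 2*k+1) (hbU : b ≤ 2*k+1) (hcU : c ≤ 2*k+1)
    (haU' : a' ≤ 2*k+1) (hbU' : b' ≤ 2*k+1) (hcU' : c' ≤ 2*k+1) :
    fOp k a' b' c' = fOp k a b c + 1 ∨ fOp k a b c = fOp k a' b' c' + 1 := by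
  unfold fOp
  split_ifs <;>
    first
      | omega
      | (apply med_step <;> omega)
      | (apply clamp_step <;> omega)

lemma fOp_bounds (k a b c : ℕ) (ha : 1 ≤ a) (ha' : a ≤ 2*k+1) (hb : 1 ≤ b)
    (hb' : b ≤ 2*k+1) (hc : 1 ≤ c) (hc' : c ≤ 2*k+1) :
    1 ≤ fOp k a b c ∧ fOp k a b c ≤ 2*k+1 := by
  unfold fOp med clamp; split_ifs <;> constructor <;> omega


set_option maxHeartbeats 1000000 in
/-- If `u1v1, u2v2, u3v3` are edges of `C_{2k+1}`, none of which is the edge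
`{1, 2k+1}`, then `{f(u1,u2,u3), f(v1,v2,v3)}` is an edge of `C_{2k+1}`. -/
theorem stmt9 (k : ℕ) (hk : 1 ≤ k) (u1 v1 u2 v2 u3 v3 : ℕ)
    (he1 : IsEdge k u1 v1) (he2 : IsEdge k u2 v2) (he3 : IsEdge k u3 v3)
    (hne1 : ¬((u1 = 1 ∧ v1 = 2 * k + 1) ∨ (v1 = 1 ∧ u1 = 2 * k + 1)))
    (hne2 : ¬((u2 = 1 ∧ v2 = 2 * k + 1) ∨ (v2 = 1 ∧ u2 = 2 * k + 1)))
    (hne3 : ¬((u3 = 1 ∧ v3 = 2 * k + 1) ∨ (v3 = 1 ∧ u3 = 2 * k + 1))) :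
    IsEdge k (fOp k u1 u2 u3) (fOp k v1 v2 v3) := by
  unfold IsEdge at he1 he2 he3 ⊢
  obtain ⟨hu1, hu1', hv1, hv1', h1⟩ := he1
  obtain ⟨hu2, hu2', hv2, hv2', h2⟩ := he2
  obtain ⟨hu3, hu3', hv3, hv3', h3⟩ := he3
  have h1' : v1 = u1 + 1 ∨ u1 = v1 + 1 := by omega
  have h2' : v2 = u2 + 1 ∨ u2 = v2 + 1 := by omega
  have h3' : v3 = u3 + 1 ∨ u3 = v3 + 1 := by omega
  have hbu := fOp_bounds k u1 u2 u3 hu1 hu1' hu2 hu2' hu3 hu3'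
  have hbv := fOp_bounds k v1 v2 v3 hv1 hv1' hv2 hv2' hv3 hv3'
  have hstep := fOp_step k u1 u2 u3 v1 v2 v3 h1' h2' h3' hu1' hu2' hu3' hv1' hv2' hv3'
  exact ⟨hbu.1, hbu.2, hbv.1, hbv.2, by omega⟩
end

section
/- Call (u1,u2,u3) ∈ {1,...,2k+1}^3 a bad triple if the set {u1,u2,u3} contains 1 together with two vertices strictly greater than 1 exactly one of which is even. With f as defined on the cycle C_{2k+1}: if u1v1, u2v2, u3v3 are edges of C_{2k+1} such that neither (u1,u2,u3) nor (v1,v2,v3) is a bad triple, then {f(u1,u2,u3), f(v1,v2,v3)} is an edge of C_{2k+1}. -/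
/-! Auxiliary machinery -/

def Step (k u v : ℕ) : Prop :=
  1 ≤ u ∧ u ≤ 2 * k + 1 ∧ 1 ≤ v ∧ v ≤ 2 * k + 1 ∧ (v = u + 1 ∨ u = v + 1)

def Wrap (k u v : ℕ) : Prop := (u = 1 ∧ v = 2 * k + 1) ∨ (u = 2 * k + 1 ∧ v = 1)

theorem classify (k u v : ℕ) (h : IsEdge k u v) : Step k u v ∨ Wrap k u v := by
  unfold IsEdge at h; unfold Step Wrap; tauto

theorem Step_symm (k u v : ℕ) (h : Step k u v) : Step k v u := by
  unfold Step at *; tauto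

theorem IsEdge_symm (k u v : ℕ) (h : IsEdge k u v) : IsEdge k v u := by
  unfold IsEdge at *; tauto

theorem bad12 (a b c : ℕ) : BadTriple a b c ↔ BadTriple b a c := by
  unfold BadTriple
  constructor <;> rintro ⟨h, x, y, hx, hy, p1, p2, p3, p4⟩ <;>
    exact ⟨by tauto, x, y, by tauto, by tauto, p1, p2, p3, p4⟩

theorem bad13 (a b c : ℕ) : BadTriple a b c ↔ BadTriple c b a := by
  unfold BadTriple
  constructor <;> rintro ⟨h, x, y, hx, hy, p1, p2, p3, p4⟩ <;>
    exact ⟨by tauto, x, y, by tauto, by tauto, p1, p2, p3, p4⟩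

theorem bad23 (a b c : ℕ) : BadTriple a b c ↔ BadTriple a c b := by
  unfold BadTriple
  constructor <;> rintro ⟨h, x, y, hx, hy, p1, p2, p3, p4⟩ <;>
    exact ⟨by tauto, x, y, by tauto, by tauto, p1, p2, p3, p4⟩

/-! Branch reduction lemmas for `fOp` -/

theorem fOp_same (k a b c : ℕ) (h : a % 2 = b % 2) (h' : b % 2 = c % 2) :
    fOp k a b c = med a b c := by
  simp only [fOp, if_pos (show a % 2 = b % 2 ∧ b % 2 = c % 2 from ⟨h, h'⟩)]

theorem fOp_ab (k a b c : ℕ) (h : a % 2 = b % 2) (h' : b % 2 ≠ c % 2) :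
    fOp k a b c = clamp (min a b) (max a b) (2 * k + 3 - c) := by
  simp only [fOp, if_neg (show ¬(a % 2 = b % 2 ∧ b % 2 = c % 2) by tauto), if_pos h]

theorem fOp_ac (k a b c : ℕ) (h : a % 2 ≠ b % 2) (h' : a % 2 = c % 2) :
    fOp k a b c = clamp (min a c) (max a c) (2 * k + 3 - b) := by
  simp only [fOp, if_neg (show ¬(a % 2 = b % 2 ∧ b % 2 = c % 2) by tauto),
    if_neg h, if_pos h']

theorem fOp_bc (k a b c : ℕ) (h : a % 2 ≠ b % 2) (h' : a % 2 ≠ c % 2) :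
    fOp k a b c = clamp (min b c) (max b c) (2 * k + 3 - a) := by
  simp only [fOp, if_neg (show ¬(a % 2 = b % 2 ∧ b % 2 = c % 2) by tauto),
    if_neg h, if_neg h']

/-! Commutativity of `fOp` -/

theorem fOp_comm12 (k a b c : ℕ) : fOp k a b c = fOp k b a c := by
  rcases Nat.mod_two_eq_zero_or_one a with ha | ha <;>
  rcases Nat.mod_two_eq_zero_or_one b with hb | hb <;>
  rcases Nat.mod_two_eq_zero_or_one c with hc | hc <;>
  first
  | (rw [fOp_same k a b c (by omega) (by omega), fOp_same k b a c (by omega) (by omega)]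
     simp only [med, min_def, max_def]; split_ifs <;> omega)
  | (rw [fOp_ab k a b c (by omega) (by omega), fOp_ab k b a c (by omega) (by omega)]
     simp only [clamp, min_def, max_def]; split_ifs <;> omega)
  | (rw [fOp_ac k a b c (by omega) (by omega), fOp_bc k b a c (by omega) (by omega)])
  | (rw [fOp_bc k a b c (by omega) (by omega), fOp_ac k b a c (by omega) (by omega)])

theorem fOp_comm23 (k a b c : ℕ) : fOp k a b c = fOp k a c b := by
  rcases Nat.mod_two_eq_zero_or_one a with ha | ha <;>
  rcases Nat.mod_two_eq_zero_or_one b with hb | hb <;>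
  rcases Nat.mod_two_eq_zero_or_one c with hc | hc <;>
  first
  | (rw [fOp_same k a b c (by omega) (by omega), fOp_same k a c b (by omega) (by omega)]
     simp only [med, min_def, max_def]; split_ifs <;> omega)
  | (rw [fOp_ab k a b c (by omega) (by omega), fOp_ac k a c b (by omega) (by omega)])
  | (rw [fOp_ac k a b c (by omega) (by omega), fOp_ab k a c b (by omega) (by omega)])
  | (rw [fOp_bc k a b c (by omega) (by omega), fOp_bc k a c b (by omega) (by omega)]
     simp only [clamp, min_def, max_def]; split_ifs <;> omega)

theorem fOp_comm13 (k a b c : ℕ) : fOp k a b c = fOp k c b a := by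
  rw [fOp_comm12, fOp_comm23, fOp_comm12]

/-! Generic step lemmas -/

set_option maxHeartbeats 2000000 in
theorem clamp_edge (k a b c a' b' c' : ℕ)
    (ha : a % 2 = b % 2) (hc : c % 2 ≠ a % 2)
    (h1 : a' = a + 1 ∨ a = a' + 1) (h2 : b' = b + 1 ∨ b = b' + 1) (h3 : c' = c + 1 ∨ c = c' + 1)
    (ba : 1 ≤ a ∧ a ≤ 2*k+1) (ba' : 1 ≤ a' ∧ a' ≤ 2*k+1)
    (bb : 1 ≤ b ∧ b ≤ 2*k+1) (bb' : 1 ≤ b' ∧ b' ≤ 2*k+1)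
    (bc : 1 ≤ c ∧ c ≤ 2*k+1) (bc' : 1 ≤ c' ∧ c' ≤ 2*k+1) :
    IsEdge k (clamp (min a b) (max a b) (2*k+3-c))
      (clamp (min a' b') (max a' b') (2*k+3-c')) := by
  simp only [IsEdge, clamp, min_def, max_def]
  split_ifs <;> omega

set_option maxHeartbeats 2000000 in
theorem med_edge (k a b c a' b' c' : ℕ)
    (ha : a % 2 = b % 2) (hc : b % 2 = c % 2)
    (h1 : a' = a + 1 ∨ a = a' + 1) (h2 : b' = b + 1 ∨ b = b' + 1) (h3 : c' = c + 1 ∨ c = c' + 1)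
    (ba : 1 ≤ a ∧ a ≤ 2*k+1) (ba' : 1 ≤ a' ∧ a' ≤ 2*k+1)
    (bb : 1 ≤ b ∧ b ≤ 2*k+1) (bb' : 1 ≤ b' ∧ b' ≤ 2*k+1)
    (bc : 1 ≤ c ∧ c ≤ 2*k+1) (bc' : 1 ≤ c' ∧ c' ≤ 2*k+1) :
    IsEdge k (med a b c) (med a' b' c') := by
  simp only [IsEdge, med, min_def, max_def]
  split_ifs <;> omega

/-! The case of three step edges -/

theorem L0 (k a b c a' b' c' : ℕ)
    (h1 : Step k a a') (h2 : Step k b b') (h3 : Step k c c') :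
    IsEdge k (fOp k a b c) (fOp k a' b' c') := by
  obtain ⟨a1, a2, a3, a4, a5⟩ := h1
  obtain ⟨b1, b2, b3, b4, b5⟩ := h2
  obtain ⟨c1, c2, c3, c4, c5⟩ := h3
  rcases Nat.mod_two_eq_zero_or_one a with ha | ha <;>
  rcases Nat.mod_two_eq_zero_or_one b with hb | hb <;>
  rcases Nat.mod_two_eq_zero_or_one c with hc | hc <;>
  first
  | (rw [fOp_same k a b c (by omega) (by omega), fOp_same k a' b' c' (by omega) (by omega)]
     exact med_edge k a b c a' b' c' (by omega) (by omega) a5 b5 c5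
       ⟨a1, a2⟩ ⟨a3, a4⟩ ⟨b1, b2⟩ ⟨b3, b4⟩ ⟨c1, c2⟩ ⟨c3, c4⟩)
  | (rw [fOp_ab k a b c (by omega) (by omega), fOp_ab k a' b' c' (by omega) (by omega)]
     exact clamp_edge k a b c a' b' c' (by omega) (by omega) a5 b5 c5
       ⟨a1, a2⟩ ⟨a3, a4⟩ ⟨b1, b2⟩ ⟨b3, b4⟩ ⟨c1, c2⟩ ⟨c3, c4⟩)
  | (rw [fOp_ac k a b c (by omega) (by omega), fOp_ac k a' b' c' (by omega) (by omega)]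
     exact clamp_edge k a c b a' c' b' (by omega) (by omega) a5 c5 b5
       ⟨a1, a2⟩ ⟨a3, a4⟩ ⟨c1, c2⟩ ⟨c3, c4⟩ ⟨b1, b2⟩ ⟨b3, b4⟩)
  | (rw [fOp_bc k a b c (by omega) (by omega), fOp_bc k a' b' c' (by omega) (by omega)]
     exact clamp_edge k b c a b' c' a' (by omega) (by omega) b5 c5 a5
       ⟨b1, b2⟩ ⟨b3, b4⟩ ⟨c1, c2⟩ ⟨c3, c4⟩ ⟨a1, a2⟩ ⟨a3, a4⟩)

/-! One wrap edge in the first position -/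

theorem helper1 (k : ℕ) (hk : 1 ≤ k) (b c b' c' : ℕ)
    (h2 : Step k b b') (h3 : Step k c c') (hbu : ¬ BadTriple 1 b c) :
    IsEdge k (fOp k 1 b c) (fOp k (2*k+1) b' c') := by
  obtain ⟨b1, b2, b3, b4, b5⟩ := h2
  obtain ⟨c1, c2, c3, c4, c5⟩ := h3
  rcases Nat.mod_two_eq_zero_or_one b with hb | hb <;>
    rcases Nat.mod_two_eq_zero_or_one c with hc | hc
  · -- b even, c even
    rw [fOp_bc k 1 b c (by omega) (by omega), fOp_same k (2*k+1) b' c' (by omega) (by omega)]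
    have v1 : clamp (min b c) (max b c) (2*k+3-1) = max b c := by
      simp only [clamp, min_def, max_def]; split_ifs <;> omega
    have v2 : med (2*k+1) b' c' = max b' c' := by
      simp only [med, min_def, max_def]; split_ifs <;> omega
    rw [v1, v2]
    simp only [IsEdge, max_def]; split_ifs <;> omega
  · -- b even, c odd : c must be 1
    have hc1 : c = 1 := by
      by_contra hne
      exact hbu ⟨Or.inl rfl, b, c, Or.inr (Or.inl rfl), Or.inr (Or.inr rfl),
        by omega, by omega, hb, hc⟩
    subst hc1
    have hcc : c' = 2 := by omega
    subst hcc
    rw [fOp_ac k 1 b 1 (by omega) (by omega), fOp_ab k (2*k+1) b' 2 (by omega) (by omega)]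
    have v1 : clamp (min 1 1) (max 1 1) (2*k+3-b) = 1 := by
      simp only [clamp, min_def, max_def]; split_ifs <;> omega
    have v2 : clamp (min (2*k+1) b') (max (2*k+1) b') (2*k+3-2) = 2*k+1 := by
      simp only [clamp, min_def, max_def]; split_ifs <;> omega
    rw [v1, v2]
    unfold IsEdge; omega
  · -- b odd, c even : b must be 1
    have hb1 : b = 1 := by
      by_contra hne
      exact hbu ⟨Or.inl rfl, c, b, Or.inr (Or.inr rfl), Or.inr (Or.inl rfl),
        by omega, by omega, hc, hb⟩
    subst hb1
    have hbb : b' = 2 := by omega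
    subst hbb
    rw [fOp_ab k 1 1 c (by omega) (by omega), fOp_ac k (2*k+1) 2 c' (by omega) (by omega)]
    have v1 : clamp (min 1 1) (max 1 1) (2*k+3-c) = 1 := by
      simp only [clamp, min_def, max_def]; split_ifs <;> omega
    have v2 : clamp (min (2*k+1) c') (max (2*k+1) c') (2*k+3-2) = 2*k+1 := by
      simp only [clamp, min_def, max_def]; split_ifs <;> omega
    rw [v1, v2]
    unfold IsEdge; omega
  · -- b odd, c odd
    rw [fOp_same k 1 b c (by omega) (by omega), fOp_bc k (2*k+1) b' c' (by omega) (by omega)]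
    have v1 : med 1 b c = min b c := by
      simp only [med, min_def, max_def]; split_ifs <;> omega
    have v2 : clamp (min b' c') (max b' c') (2*k+3-(2*k+1)) = min b' c' := by
      simp only [clamp, min_def, max_def]; split_ifs <;> omega
    rw [v1, v2]
    simp only [IsEdge, min_def]; split_ifs <;> omega

theorem L1 (k : ℕ) (hk : 1 ≤ k) (w b c w' b' c' : ℕ)
    (hw : Wrap k w w') (h2 : Step k b b') (h3 : Step k c c')
    (hbu : ¬ BadTriple w b c) (hbv : ¬ BadTriple w' b' c') :
    IsEdge k (fOp k w b c) (fOp k w' b' c') := by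
  rcases hw with ⟨rfl, rfl⟩ | ⟨rfl, rfl⟩
  · exact helper1 k hk b c b' c' h2 h3 hbu
  · exact IsEdge_symm k _ _
      (helper1 k hk b' c' b c (Step_symm k b b' h2) (Step_symm k c c' h3) hbv)

/-! Two wrap edges -/

theorem L2 (k : ℕ) (hk : 1 ≤ k) (w1 w2 c w1' w2' c' : ℕ)
    (hw1 : Wrap k w1 w1') (hw2 : Wrap k w2 w2') (h3 : Step k c c')
    (hbu : ¬ BadTriple w1 w2 c) (hbv : ¬ BadTriple w1' w2' c') :
    IsEdge k (fOp k w1 w2 c) (fOp k w1' w2' c') := by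
  obtain ⟨c1, c2, c3, c4, c5⟩ := h3
  rcases Nat.mod_two_eq_zero_or_one c with hc | hc <;>
    rcases hw1 with ⟨rfl, rfl⟩ | ⟨rfl, rfl⟩ <;> rcases hw2 with ⟨rfl, rfl⟩ | ⟨rfl, rfl⟩
  · -- c even, (1,1)
    rw [fOp_ab k 1 1 c (by omega) (by omega), fOp_same k (2*k+1) (2*k+1) c' (by omega) (by omega)]
    have v1 : clamp (min 1 1) (max 1 1) (2*k+3-c) = 1 := by
      simp only [clamp, min_def, max_def]; split_ifs <;> omega
    have v2 : med (2*k+1) (2*k+1) c' = 2*k+1 := by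
      simp only [med, min_def, max_def]; split_ifs <;> omega
    rw [v1, v2]; unfold IsEdge; omega
  · -- c even, (1, n) : u-side bad
    exact absurd ⟨Or.inl rfl, c, 2*k+1, Or.inr (Or.inr rfl), Or.inr (Or.inl rfl),
      by omega, by omega, hc, by omega⟩ hbu
  · -- c even, (n, 1) : u-side bad
    exact absurd ⟨Or.inr (Or.inl rfl), c, 2*k+1, Or.inr (Or.inr rfl), Or.inl rfl,
      by omega, by omega, hc, by omega⟩ hbu
  · -- c even, (n, n)
    rw [fOp_ab k (2*k+1) (2*k+1) c (by omega) (by omega), fOp_same k 1 1 c' (by omega) (by omega)]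
    have v1 : clamp (min (2*k+1) (2*k+1)) (max (2*k+1) (2*k+1)) (2*k+3-c) = 2*k+1 := by
      simp only [clamp, min_def, max_def]; split_ifs <;> omega
    have v2 : med 1 1 c' = 1 := by
      simp only [med, min_def, max_def]; split_ifs <;> omega
    rw [v1, v2]; unfold IsEdge; omega
  · -- c odd, (1,1)
    rw [fOp_same k 1 1 c (by omega) (by omega), fOp_ab k (2*k+1) (2*k+1) c' (by omega) (by omega)]
    have v1 : med 1 1 c = 1 := by
      simp only [med, min_def, max_def]; split_ifs <;> omega
    have v2 : clamp (min (2*k+1) (2*k+1)) (max (2*k+1) (2*k+1)) (2*k+3-c') = 2*k+1 := by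
      simp only [clamp, min_def, max_def]; split_ifs <;> omega
    rw [v1, v2]; unfold IsEdge; omega
  · -- c odd, (1, n) : v-side (n, 1, c') bad
    exact absurd ⟨Or.inr (Or.inl rfl), c', 2*k+1, Or.inr (Or.inr rfl), Or.inl rfl,
      by omega, by omega, by omega, by omega⟩ hbv
  · -- c odd, (n, 1) : v-side (1, n, c') bad
    exact absurd ⟨Or.inl rfl, c', 2*k+1, Or.inr (Or.inr rfl), Or.inr (Or.inl rfl),
      by omega, by omega, by omega, by omega⟩ hbv
  · -- c odd, (n, n)
    rw [fOp_same k (2*k+1) (2*k+1) c (by omega) (by omega), fOp_ab k 1 1 c' (by omega) (by omega)]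
    have v1 : med (2*k+1) (2*k+1) c = 2*k+1 := by
      simp only [med, min_def, max_def]; split_ifs <;> omega
    have v2 : clamp (min 1 1) (max 1 1) (2*k+3-c') = 1 := by
      simp only [clamp, min_def, max_def]; split_ifs <;> omega
    rw [v1, v2]; unfold IsEdge; omega

/-! Three wrap edges -/

theorem L3 (k : ℕ) (hk : 1 ≤ k) (w1 w2 w3 w1' w2' w3' : ℕ)
    (hw1 : Wrap k w1 w1') (hw2 : Wrap k w2 w2') (hw3 : Wrap k w3 w3') :
    IsEdge k (fOp k w1 w2 w3) (fOp k w1' w2' w3') := by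
  rcases hw1 with ⟨rfl, rfl⟩ | ⟨rfl, rfl⟩ <;>
  rcases hw2 with ⟨rfl, rfl⟩ | ⟨rfl, rfl⟩ <;>
  rcases hw3 with ⟨rfl, rfl⟩ | ⟨rfl, rfl⟩ <;>
  rw [fOp_same k _ _ _ (by omega) (by omega), fOp_same k _ _ _ (by omega) (by omega)] <;>
  (simp only [med, min_def, max_def]; split_ifs <;> unfold IsEdge <;> omega)

/-- If `u1v1, u2v2, u3v3` are edges of `C_{2k+1}` such that neither
`(u1,u2,u3)` nor `(v1,v2,v3)` is a bad triple, then
`{f(u1,u2,u3), f(v1,v2,v3)}` is an edge of `C_{2k+1}`. -/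
theorem stmt10 (k : ℕ) (hk : 1 ≤ k) (u1 v1 u2 v2 u3 v3 : ℕ)
    (he1 : IsEdge k u1 v1) (he2 : IsEdge k u2 v2) (he3 : IsEdge k u3 v3)
    (hbu : ¬ BadTriple u1 u2 u3) (hbv : ¬ BadTriple v1 v2 v3) :
    IsEdge k (fOp k u1 u2 u3) (fOp k v1 v2 v3) := by
  rcases classify k u1 v1 he1 with h1 | h1 <;>
  rcases classify k u2 v2 he2 with h2 | h2 <;>
  rcases classify k u3 v3 he3 with h3 | h3
  · exact L0 k u1 u2 u3 v1 v2 v3 h1 h2 h3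
  · rw [fOp_comm13 k u1 u2 u3, fOp_comm13 k v1 v2 v3]
    exact L1 k hk u3 u2 u1 v3 v2 v1 h3 h2 h1
      (fun h => hbu ((bad13 u3 u2 u1).mp h)) (fun h => hbv ((bad13 v3 v2 v1).mp h))
  · rw [fOp_comm12 k u1 u2 u3, fOp_comm12 k v1 v2 v3]
    exact L1 k hk u2 u1 u3 v2 v1 v3 h2 h1 h3
      (fun h => hbu ((bad12 u2 u1 u3).mp h)) (fun h => hbv ((bad12 v2 v1 v3).mp h))
  · rw [fOp_comm13 k u1 u2 u3, fOp_comm13 k v1 v2 v3]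
    exact L2 k hk u3 u2 u1 v3 v2 v1 h3 h2 h1
      (fun h => hbu ((bad13 u3 u2 u1).mp h)) (fun h => hbv ((bad13 v3 v2 v1).mp h))
  · exact L1 k hk u1 u2 u3 v1 v2 v3 h1 h2 h3 hbu hbv
  · rw [fOp_comm23 k u1 u2 u3, fOp_comm23 k v1 v2 v3]
    exact L2 k hk u1 u3 u2 v1 v3 v2 h1 h3 h2
      (fun h => hbu ((bad23 u1 u3 u2).mp h)) (fun h => hbv ((bad23 v1 v3 v2).mp h))
  · exact L2 k hk u1 u2 u3 v1 v2 v3 h1 h2 h3 hbu hbv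
  · exact L3 k hk u1 u2 u3 v1 v2 v3 h1 h2 h3
end

section
/- Let G be a graph with a shadow-complete layering (V_0, ..., V_t), i.e., an ordered partition of V(G) into layers such that every edge joins vertices in the same layer or in consecutive layers, and for each i ≥ 1 and each connected component X of the subgraph induced by V_i ∪ ... ∪ V_t, the set of vertices in V_{i−1} adjacent to X induces a clique. Suppose G is connected and V_0 is nonempty. Then: (a) the subgraph induced by V_0 is connected, and (b) for every i ≥ 1 and every vertex v ∈ V_i, the shadow of the component of v in G[V_i ∪ ... ∪ V_t] is nonempty. -/
/-- Split lemma: a walk from a vertex in layers `≥ i` to a vertex in layers `< i`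
produces a vertex `x` in layers `≥ i` reachable from the start within `G[V_{≥i}]`,
adjacent to a vertex `w` of layer `i-1`, and a strictly shorter walk from `w`. -/
lemma stmt18_aux {V : Type*} (G : SimpleGraph V) (L : V → ℕ)
    (hlayer : ∀ u v : V, G.Adj u v → L u = L v ∨ L u + 1 = L v ∨ L v + 1 = L u)
    (i : ℕ) (hi : 1 ≤ i) :
    ∀ {c b : V} (q : G.Walk c b), ∀ (hc : i ≤ L c), L b < i →
      ∃ (x w : V) (hx : i ≤ L x), L w = i - 1 ∧ G.Adj x w ∧
        (G.induce {v : V | i ≤ L v}).Reachable ⟨c, hc⟩ ⟨x, hx⟩ ∧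
        ∃ q' : G.Walk w b, q'.length < q.length := by
  intro c b q
  induction q with
  | nil => intro hc hb; omega
  | @cons c d b h q ih =>
    intro hc hb
    by_cases hd : i ≤ L d
    · obtain ⟨x, w, hx, hw, hadj, hr, q', hq'⟩ := ih hd hb
      refine ⟨x, w, hx, hw, hadj, ?_, q', ?_⟩
      · exact (SimpleGraph.Adj.reachable
          (show (G.induce {v : V | i ≤ L v}).Adj ⟨c, hc⟩ ⟨d, hd⟩ from h)).trans hr
      · simpa [SimpleGraph.Walk.length_cons] using Nat.lt_succ_of_lt hq'
    · push_neg at hd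
      have hw : L d = i - 1 := by
        rcases hlayer c d h with h1 | h1 | h1 <;> omega
      exact ⟨c, d, hc, hw, h, SimpleGraph.Reachable.refl _, q, by
        simp [SimpleGraph.Walk.length_cons]⟩

/-- A connected graph with a shadow-complete layering whose first layer is
nonempty satisfies: (a) the subgraph induced by the first layer is connected,
and (b) every vertex of a layer `i ≥ 1` has a nonempty shadow, i.e. the
connected component of `v` in `G[V_{≥ i}]` has a neighbor in `V_{i-1}`.

The layering is given by the layer-index function `L : V → ℕ`. -/
theorem stmt18 {V : Type*} (G : SimpleGraph V) (L : V → ℕ)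
    (hconn : G.Connected)
    (hlayer : ∀ u v : V, G.Adj u v → L u = L v ∨ L u + 1 = L v ∨ L v + 1 = L u)
    (hshadow : ∀ i : ℕ, 1 ≤ i → ∀ u1 u2 : V,
      ∀ x1 x2 : {v : V // v ∈ {v : V | i ≤ L v}},
      L u1 = i - 1 → L u2 = i - 1 → G.Adj u1 x1.1 → G.Adj u2 x2.1 →
      (G.induce {v : V | i ≤ L v}).Reachable x1 x2 → u1 ≠ u2 → G.Adj u1 u2)
    (h0 : ∃ v : V, L v = 0) :
    (∀ x y : {v : V // v ∈ {v : V | L v = 0}},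
      (G.induce {v : V | L v = 0}).Reachable x y) ∧
    (∀ i : ℕ, 1 ≤ i → ∀ v : V, ∀ hv : L v = i,
      ∃ u : V, L u = i - 1 ∧ ∃ x : {w : V // w ∈ {w : V | i ≤ L w}},
        (G.induce {w : V | i ≤ L w}).Reachable ⟨v, hv.ge⟩ x ∧ G.Adj u x.1) := by
  have key : ∀ n : ℕ, ∀ c b : V, ∀ p : G.Walk c b, p.length ≤ n →
      ∀ (hcz : L c = 0) (hbz : L b = 0),
      (G.induce {v : V | L v = 0}).Reachable ⟨c, hcz⟩ ⟨b, hbz⟩ := by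
    intro n
    induction n with
    | zero =>
      intro c b p hp hc hb
      have : c = b := p.eq_of_length_eq_zero (Nat.le_zero.mp hp)
      subst this
      exact SimpleGraph.Reachable.refl _
    | succ n ih =>
      intro c b p hp hc hb
      cases p with
      | nil => exact SimpleGraph.Reachable.refl _
      | @cons _ d _ h q =>
        simp only [SimpleGraph.Walk.length_cons, Nat.succ_le_succ_iff] at hp
        by_cases hd : L d = 0
        · exact (SimpleGraph.Adj.reachable
            (show (G.induce {v : V | L v = 0}).Adj ⟨c, hc⟩ ⟨d, hd⟩ from h)).trans
            (ih d b q hp hd hb)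
        · have hd1 : 1 ≤ L d := by omega
          obtain ⟨x, w, hx, hw, hadj, hr, q', hq'⟩ :=
            stmt18_aux G L hlayer 1 le_rfl q hd1 (by omega)
          have hw0 : L w = 0 := by omega
          have hcw : (G.induce {v : V | L v = 0}).Reachable ⟨c, hc⟩ ⟨w, hw0⟩ := by
            by_cases hcw : c = w
            · subst hcw; exact SimpleGraph.Reachable.refl _
            · exact SimpleGraph.Adj.reachable
                (show (G.induce {v : V | L v = 0}).Adj ⟨c, hc⟩ ⟨w, hw0⟩ from
                  hshadow 1 le_rfl c w ⟨d, hd1⟩ ⟨x, hx⟩ (by omega) (by omega)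
                    h hadj.symm hr hcw)
          exact hcw.trans (ih w b q' (by omega) hw0 hb)
  constructor
  · intro x y
    obtain ⟨p⟩ := hconn.preconnected x.1 y.1
    exact key p.length x.1 y.1 p le_rfl x.2 y.2
  · intro i hi v hv
    obtain ⟨v0, hv0⟩ := h0
    obtain ⟨p⟩ := hconn.preconnected v v0
    obtain ⟨x, w, hx, hw, hadj, hr, _⟩ :=
      stmt18_aux G L hlayer i hi p (le_of_eq hv.symm) (by omega)
    exact ⟨w, hw, ⟨x, hx⟩, hr, hadj.symm⟩
end

section
/- Let G be a graph with a shadow-complete layering (V_0,...,V_t), and suppose two vertices v1, v2 both lie in layer V_i. Then v1 and v2 are in the same connected component of G[V_i] if and only if they are in the same connected component of G[V_i ∪ V_{i+1} ∪ ... ∪ V_t]. -/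
private lemma stmt19_excurse {V : Type*} (G : SimpleGraph V) (L : V → ℕ) (i : ℕ) :
    ∀ n : ℕ, ∀ (u w : {v : V // v ∈ {v : V | i ≤ L v}}) (hx : i + 1 ≤ L u.1)
      (hb : L w.1 = i) (q : (G.induce {v : V | i ≤ L v}).Walk u w), q.length ≤ n →
      ∃ (y z : V) (hy : L y = i) (hz : i + 1 ≤ L z),
        G.Adj y z ∧
        (G.induce {v : V | i + 1 ≤ L v}).Reachable ⟨u.1, hx⟩ ⟨z, hz⟩ ∧
        ∃ q' : (G.induce {v : V | i ≤ L v}).Walk ⟨y, hy.ge⟩ w,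
          q'.length < q.length := by
  intro n
  induction n with
  | zero =>
    intro u w hx hb q hq
    cases q with
    | nil => omega
    | cons h r => simp at hq
  | succ n ih =>
    intro u w hx hb q hq
    cases q with
    | nil => omega
    | cons h r =>
      rename_i m
      by_cases hm : L m.1 = i
      · refine ⟨m.1, u.1, hm, hx, ?_, SimpleGraph.Reachable.refl _, ?_⟩
        · exact (h : G.Adj u.1 m.1).symm
        · exact ⟨r, by simp⟩
      · have hm' : i + 1 ≤ L m.1 := by have := m.2; simp only [Set.mem_setOf_eq] at this; omega
        obtain ⟨y, z, hy, hz, hadj, hreach, q', hq'⟩ :=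
          ih m w hm' hb r (by simp at hq; omega)
        refine ⟨y, z, hy, hz, hadj, ?_, q', by simp; omega⟩
        refine SimpleGraph.Reachable.trans ?_ hreach
        exact SimpleGraph.Adj.reachable (by exact (h : G.Adj u.1 m.1))

private lemma stmt19_descend {V : Type*} (G : SimpleGraph V) (L : V → ℕ)
    (hshadow : ∀ i : ℕ, 1 ≤ i → ∀ u1 u2 : V,
      ∀ x1 x2 : {v : V // v ∈ {v : V | i ≤ L v}},
      L u1 = i - 1 → L u2 = i - 1 → G.Adj u1 x1.1 → G.Adj u2 x2.1 →
      (G.induce {v : V | i ≤ L v}).Reachable x1 x2 → u1 ≠ u2 → G.Adj u1 u2)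
    (i : ℕ) :
    ∀ n : ℕ, ∀ (u w : {v : V // v ∈ {v : V | i ≤ L v}}) (ha : L u.1 = i)
      (hb : L w.1 = i) (p : (G.induce {v : V | i ≤ L v}).Walk u w), p.length ≤ n →
      (G.induce {v : V | L v = i}).Reachable ⟨u.1, ha⟩ ⟨w.1, hb⟩ := by
  intro n
  induction n with
  | zero =>
    intro u w ha hb p hp
    have : u = w := p.eq_of_length_eq_zero (by omega)
    subst this
    exact SimpleGraph.Reachable.refl _
  | succ n ih =>
    intro u w ha hb p hp
    cases p with
    | nil => exact SimpleGraph.Reachable.refl _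
    | cons h r =>
      rename_i m
      by_cases hm : L m.1 = i
      · have step : (G.induce {v : V | L v = i}).Adj ⟨u.1, ha⟩ ⟨m.1, hm⟩ :=
          (by exact (h : G.Adj u.1 m.1))
        exact step.reachable.trans (ih m w hm hb r (by simp at hp; omega))
      · have hm' : i + 1 ≤ L m.1 := by have := m.2; simp only [Set.mem_setOf_eq] at this; omega
        obtain ⟨y, z, hy, hz, hadj, hreach, q', hq'⟩ :=
          stmt19_excurse G L i r.length m w hm' hb r le_rfl
        have tail : (G.induce {v : V | L v = i}).Reachable ⟨y, hy⟩ ⟨w.1, hb⟩ :=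
          ih ⟨y, hy.ge⟩ w hy hb q' (by simp at hp; omega)
        by_cases hne : u.1 = y
        · have : (⟨u.1, ha⟩ : {v : V // v ∈ {v : V | L v = i}}) = ⟨y, hy⟩ :=
            Subtype.ext hne
          rw [this]; exact tail
        · have hadj' : G.Adj u.1 y :=
            hshadow (i + 1) (by omega) u.1 y ⟨m.1, hm'⟩ ⟨z, hz⟩
              (by omega) (by omega) (by exact (h : G.Adj u.1 m.1)) hadj hreach hne
          have step : (G.induce {v : V | L v = i}).Adj ⟨u.1, ha⟩ ⟨y, hy⟩ :=
            (by exact hadj')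
          exact step.reachable.trans tail

/-- In a graph with a shadow-complete layering, two vertices of the same
layer `V_i` lie in the same connected component of `G[V_i]` if and only if
they lie in the same connected component of `G[V_i ∪ ⋯ ∪ V_t]`.

The layering is given by the layer-index function `L : V → ℕ`. -/
theorem stmt19 {V : Type*} (G : SimpleGraph V) (L : V → ℕ)
    (hlayer : ∀ u v : V, G.Adj u v → L u = L v ∨ L u + 1 = L v ∨ L v + 1 = L u)
    (hshadow : ∀ i : ℕ, 1 ≤ i → ∀ u1 u2 : V,
      ∀ x1 x2 : {v : V // v ∈ {v : V | i ≤ L v}},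
      L u1 = i - 1 → L u2 = i - 1 → G.Adj u1 x1.1 → G.Adj u2 x2.1 →
      (G.induce {v : V | i ≤ L v}).Reachable x1 x2 → u1 ≠ u2 → G.Adj u1 u2)
    (i : ℕ) (v1 v2 : V) (h1 : L v1 = i) (h2 : L v2 = i) :
    (G.induce {v : V | L v = i}).Reachable ⟨v1, h1⟩ ⟨v2, h2⟩ ↔
      (G.induce {v : V | i ≤ L v}).Reachable ⟨v1, h1.ge⟩ ⟨v2, h2.ge⟩ := by
  constructor
  · intro hr
    obtain ⟨p⟩ := hr
    have key : ∀ (a b : {v : V // v ∈ {v : V | L v = i}})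
        (p : (G.induce {v : V | L v = i}).Walk a b),
        (G.induce {v : V | i ≤ L v}).Reachable ⟨a.1, a.2.ge⟩ ⟨b.1, b.2.ge⟩ := by
      intro a b p
      induction p with
      | nil => exact SimpleGraph.Reachable.refl _
      | cons h r ihp =>
        exact (SimpleGraph.Adj.reachable (by exact (h : G.Adj _ _))).trans ihp
    exact key _ _ p
  · intro hr
    obtain ⟨p⟩ := hr
    exact stmt19_descend G L hshadow i p.length ⟨v1, h1.ge⟩ ⟨v2, h2.ge⟩ h1 h2 p le_rfl
end
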